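/- (Bound on MPGNN node representations.) Consider an l-step MPGNN as defined in the context, with input node features X whose rows have ℓ2-norm at most B. Let κ = C_φ B ‖W_1‖₂ and τ = d · C_φ C_ρ C_g ‖W_2‖₂. Then for every step j with 1 ≤ j ≤ l − 1: max_i |H_j[i,:]|₂ ≤ j·κ if τ = 1, and max_i |H_j[i,:]|₂ ≤ κ · (τ^j − 1)/(τ − 1) if τ ≠ 1. -/

import Mathlib

open Finset

/-- Euclidean (ℓ2) norm of a vector in `ℝ^q`. -/
noncomputable def l2norm {q : ℕ} (v : Fin q → ℝ) : ℝ := Real.sqrt (∑ j, v j ^ 2)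

/-- Spectral norm of a real matrix: the operator norm induced by the Euclidean
vector norm, i.e. `sup {‖A v‖₂ : ‖v‖₂ ≤ 1}`. -/
noncomputable def specNorm {p q : ℕ} (A : Matrix (Fin p) (Fin q) ℝ) : ℝ :=
  sSup {r : ℝ | ∃ v : Fin q → ℝ, l2norm v ≤ 1 ∧ r = l2norm (A.mulVec v)}

/-- Frobenius norm of a real matrix. -/
noncomputable def frobNorm {p q : ℕ} (A : Matrix (Fin p) (Fin q) ℝ) : ℝ :=
  Real.sqrt (∑ i, ∑ j, A i j ^ 2)

/-- `A` is the adjacency matrix of a simple undirected graph (0/1 entries, symmetric,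
zero diagonal) with maximum node degree `d - 1`. -/
def IsSimpleAdj {n : ℕ} (d : ℕ) (A : Matrix (Fin n) (Fin n) ℝ) : Prop :=
  (∀ i j, A i j = 0 ∨ A i j = 1) ∧ (∀ i j, A i j = A j i) ∧ (∀ i, A i i = 0) ∧
    ∀ i, ∑ j, A i j ≤ (d : ℝ) - 1

/-- The normalized graph Laplacian `L = D^{-1/2} (A + I) D^{-1/2}` where `D` is the
degree matrix of `Ã = A + I`; entrywise `L i j = Ã i j / (√(deg i) * √(deg j))`. -/
noncomputable def gLap {n : ℕ} (A : Matrix (Fin n) (Fin n) ℝ) :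
    Matrix (Fin n) (Fin n) ℝ :=
  Matrix.of fun i j =>
    (A + 1) i j / (Real.sqrt (∑ k, (A + 1) i k) * Real.sqrt (∑ k, (A + 1) j k))

/-- Row-wise application of a map `ℝ^h → ℝ^h` to a matrix. -/
noncomputable def rowMap {n h : ℕ} (f : (Fin h → ℝ) → Fin h → ℝ)
    (M : Matrix (Fin n) (Fin h) ℝ) : Matrix (Fin n) (Fin h) ℝ :=
  Matrix.of fun i => f (M i)

/-- `f` is `C`-Lipschitz with respect to the ℓ2 norm. -/
def LipL2 {h : ℕ} (C : ℝ) (f : (Fin h → ℝ) → Fin h → ℝ) : Prop :=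
  ∀ x y, l2norm (fun i => f x i - f y i) ≤ C * l2norm (fun i => x i - y i)

/-- `Cin, Cout` are incidence matrices of a graph with `n` nodes, `c` directed edges
and maximum node degree `d - 1`: 0/1 entries, each column of `Cout` has exactly one
nonzero entry, and each row of `Cin` sums to at most `d`. -/
def IsIncidence {n c : ℕ} (d : ℕ) (Cin Cout : Matrix (Fin n) (Fin c) ℝ) : Prop :=
  (∀ i k, Cin i k = 0 ∨ Cin i k = 1) ∧ (∀ i k, Cout i k = 0 ∨ Cout i k = 1) ∧
    (∀ k, ∑ i, Cout i k = 1) ∧ ∀ i, ∑ k, Cin i k ≤ (d : ℝ)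

/-- Node representations of an MPGNN: `H 0 = 0` and
`H (k+1) = φ(X W₁ + ρ(Cin · g(Coutᵀ · H k)) W₂)`, with `g, ρ, φ` applied row-wise. -/
noncomputable def mpH {n c h0 hd : ℕ} (Cin Cout : Matrix (Fin n) (Fin c) ℝ)
    (g ρ φ : (Fin hd → ℝ) → Fin hd → ℝ)
    (W1 : Matrix (Fin h0) (Fin hd) ℝ) (W2 : Matrix (Fin hd) (Fin hd) ℝ)
    (X : Matrix (Fin n) (Fin h0) ℝ) : ℕ → Matrix (Fin n) (Fin hd) ℝ
  | 0 => 0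
  | (k + 1) =>
      rowMap φ
        (X * W1 + rowMap ρ (Cin * rowMap g (Cout.transpose * mpH Cin Cout g ρ φ W1 W2 X k)) * W2)

/-- The aggregated messages `M̄_{k+1} = Cin · g(Coutᵀ · H k)` of an MPGNN. -/
noncomputable def mpMbar {n c h0 hd : ℕ} (Cin Cout : Matrix (Fin n) (Fin c) ℝ)
    (g ρ φ : (Fin hd → ℝ) → Fin hd → ℝ)
    (W1 : Matrix (Fin h0) (Fin hd) ℝ) (W2 : Matrix (Fin hd) (Fin hd) ℝ)
    (X : Matrix (Fin n) (Fin h0) ℝ) (k : ℕ) : Matrix (Fin n) (Fin hd) ℝ :=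
  Cin * rowMap g (Cout.transpose * mpH Cin Cout g ρ φ W1 W2 X k)

/-- Output of an `l`-step MPGNN: the mean readout `(1/n) 1ₙ H_{l-1} W_l`. -/
noncomputable def mpOut {n c h0 hd K : ℕ} (Cin Cout : Matrix (Fin n) (Fin c) ℝ)
    (g ρ φ : (Fin hd → ℝ) → Fin hd → ℝ)
    (W1 : Matrix (Fin h0) (Fin hd) ℝ) (W2 : Matrix (Fin hd) (Fin hd) ℝ)
    (Wl : Matrix (Fin hd) (Fin K) ℝ)
    (X : Matrix (Fin n) (Fin h0) ℝ) (l : ℕ) : Fin K → ℝ :=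
  fun j => (1 / (n : ℝ)) * ∑ i, (mpH Cin Cout g ρ φ W1 W2 X (l - 1) * Wl) i j

def toE {q : ℕ} (v : Fin q → ℝ) : EuclideanSpace ℝ (Fin q) := WithLp.toLp 2 v

lemma l2norm_eq {q : ℕ} (v : Fin q → ℝ) : l2norm v = ‖toE v‖ := by
  rw [EuclideanSpace.norm_eq]
  simp [l2norm, toE, Real.norm_eq_abs, sq_abs]

lemma l2norm_nonneg {q : ℕ} (v : Fin q → ℝ) : 0 ≤ l2norm v := Real.sqrt_nonneg _

lemma l2norm_zero {q : ℕ} : l2norm (0 : Fin q → ℝ) = 0 := by simp [l2norm]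

lemma l2norm_add_le {q : ℕ} (x y : Fin q → ℝ) :
    l2norm (x + y) ≤ l2norm x + l2norm y := by
  rw [l2norm_eq, l2norm_eq, l2norm_eq]
  exact norm_add_le (toE x) (toE y)

lemma l2norm_smul {q : ℕ} (a : ℝ) (x : Fin q → ℝ) :
    l2norm (a • x) = |a| * l2norm x := by
  rw [l2norm_eq, l2norm_eq]
  have : toE (a • x) = a • toE x := rfl
  rw [this, norm_smul, Real.norm_eq_abs]

lemma inner_le_l2 {q : ℕ} (v w : Fin q → ℝ) :
    ∑ i, v i * w i ≤ l2norm v * l2norm w := by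
  have h : ∑ i, v i * w i = @inner ℝ _ _ (toE v) (toE w) := by
    simp [toE, PiLp.inner_apply, RCLike.inner_apply, conj_trivial, mul_comm]
  rw [h, l2norm_eq, l2norm_eq]
  exact real_inner_le_norm _ _

lemma l2norm_sq {q : ℕ} (v : Fin q → ℝ) : l2norm v ^ 2 = ∑ j, v j ^ 2 := by
  rw [l2norm, Real.sq_sqrt]
  positivity

lemma bddAbove_spec {p q : ℕ} (A : Matrix (Fin p) (Fin q) ℝ) :
    BddAbove {r : ℝ | ∃ v : Fin q → ℝ, l2norm v ≤ 1 ∧ r = l2norm (A.mulVec v)} := by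
  refine ⟨Real.sqrt (∑ i, ∑ j, A i j ^ 2), ?_⟩
  rintro r ⟨v, hv, rfl⟩
  have h1 : ∀ i, (A.mulVec v i) ^ 2 ≤ (∑ j, A i j ^ 2) * (∑ j, v j ^ 2) := by
    intro i
    have h2 : (∑ j, A i j * v j) ^ 2 ≤ (∑ j, A i j ^ 2) * (∑ j, v j ^ 2) :=
      Finset.sum_mul_sq_le_sq_mul_sq Finset.univ (A i) v
    simpa [Matrix.mulVec, dotProduct] using h2
  have hv2 : ∑ j, v j ^ 2 ≤ 1 := by
    have := l2norm_sq v
    nlinarith [l2norm_nonneg v]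
  rw [l2norm]
  apply Real.sqrt_le_sqrt
  calc ∑ i, A.mulVec v i ^ 2 ≤ ∑ i, (∑ j, A i j ^ 2) * (∑ j, v j ^ 2) :=
        Finset.sum_le_sum fun i _ => h1 i
    _ ≤ ∑ i, (∑ j, A i j ^ 2) * 1 := by
        refine Finset.sum_le_sum fun i _ => ?_
        have : (0:ℝ) ≤ ∑ j, A i j ^ 2 := by positivity
        nlinarith
    _ = ∑ i, ∑ j, A i j ^ 2 := by simp

lemma specNorm_nonneg {p q : ℕ} (A : Matrix (Fin p) (Fin q) ℝ) : 0 ≤ specNorm A := by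
  apply le_csSup (bddAbove_spec A)
  exact ⟨0, by simp [l2norm_zero], by simp [l2norm_zero]⟩

lemma specNorm_mulVec_le {p q : ℕ} (A : Matrix (Fin p) (Fin q) ℝ) (v : Fin q → ℝ) :
    l2norm (A.mulVec v) ≤ specNorm A * l2norm v := by
  rcases eq_or_lt_of_le (l2norm_nonneg v) with h | h
  · have hv : v = 0 := by
      have h0 : ‖toE v‖ = 0 := by rw [← l2norm_eq]; exact h.symm
      have : toE v = 0 := norm_eq_zero.mp h0
      funext i; simpa [toE] using congrFun (congrArg WithLp.ofLp this) i
    simp [hv, l2norm_zero, ← h]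
  · set t := l2norm v with ht
    have h1 : l2norm ((1/t) • v) ≤ 1 := by
      rw [l2norm_smul, abs_of_pos (by positivity)]
      rw [one_div, inv_mul_cancel₀ (ne_of_gt h)]
    have h2 : l2norm (A.mulVec ((1/t) • v)) ≤ specNorm A :=
      le_csSup (bddAbove_spec A) ⟨_, h1, rfl⟩
    have h3 : A.mulVec ((1/t) • v) = (1/t) • A.mulVec v := by
      rw [Matrix.mulVec_smul]
    rw [h3, l2norm_smul, abs_of_pos (by positivity)] at h2
    calc l2norm (A.mulVec v) = t * (1/t * l2norm (A.mulVec v)) := by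
          field_simp
      _ ≤ t * specNorm A := by nlinarith [h2, le_of_lt h]
      _ = specNorm A * t := mul_comm _ _

lemma specNorm_transpose_mulVec_le {p q : ℕ} (A : Matrix (Fin p) (Fin q) ℝ)
    (v : Fin p → ℝ) : l2norm (A.transpose.mulVec v) ≤ specNorm A * l2norm v := by
  set w := A.transpose.mulVec v with hw
  have key : l2norm w ^ 2 ≤ l2norm v * (specNorm A * l2norm w) := by
    have hwj : ∀ jj, w jj = ∑ i, A i jj * v i := fun jj => by
      simp [hw, Matrix.mulVec, dotProduct, Matrix.transpose_apply]
    have h1 : l2norm w ^ 2 = ∑ i, v i * A.mulVec w i := by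
      rw [l2norm_sq]
      calc ∑ jj, w jj ^ 2 = ∑ jj, ∑ i, A i jj * v i * w jj := by
            refine Finset.sum_congr rfl fun jj _ => ?_
            rw [← Finset.sum_mul, ← hwj jj]; ring
        _ = ∑ i, ∑ jj, A i jj * v i * w jj := Finset.sum_comm
        _ = ∑ i, v i * A.mulVec w i := by
            refine Finset.sum_congr rfl fun i _ => ?_
            simp only [Matrix.mulVec, dotProduct, Finset.mul_sum]
            refine Finset.sum_congr rfl fun jj _ => by ring
    calc l2norm w ^ 2 = ∑ i, v i * A.mulVec w i := h1
      _ ≤ l2norm v * l2norm (A.mulVec w) := inner_le_l2 _ _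
      _ ≤ l2norm v * (specNorm A * l2norm w) := by
          have := specNorm_mulVec_le A w
          nlinarith [l2norm_nonneg v]
  rcases eq_or_lt_of_le (l2norm_nonneg w) with h | h
  · rw [← h]; exact mul_nonneg (specNorm_nonneg A) (l2norm_nonneg v)
  · nlinarith [key]

lemma lip_norm_le {h : ℕ} {C : ℝ} {f : (Fin h → ℝ) → Fin h → ℝ}
    (hf : LipL2 C f) (hf0 : f 0 = 0) (x : Fin h → ℝ) :
    l2norm (f x) ≤ C * l2norm x := by
  have h := hf x 0
  simpa [hf0] using h

lemma row_matmul {n p q : ℕ} (M : Matrix (Fin n) (Fin p) ℝ)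
    (W : Matrix (Fin p) (Fin q) ℝ) (i : Fin n) :
    (M * W) i = W.transpose.mulVec (M i) := by
  funext j
  simp [Matrix.mul_apply, Matrix.mulVec, dotProduct, Matrix.transpose_apply,
    mul_comm]

lemma row_matmul_le {n p q : ℕ} (M : Matrix (Fin n) (Fin p) ℝ)
    (W : Matrix (Fin p) (Fin q) ℝ) (i : Fin n) :
    l2norm ((M * W) i) ≤ specNorm W * l2norm (M i) := by
  rw [row_matmul]
  exact specNorm_transpose_mulVec_le W (M i)

lemma sum_rows_bound {m q : ℕ} (cf : Fin m → ℝ) (M : Fin m → Fin q → ℝ)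
    (hc : ∀ k, 0 ≤ cf k) (s R : ℝ) (hs : ∑ k, cf k ≤ s)
    (hM : ∀ k, l2norm (M k) ≤ R) (hR : 0 ≤ R) :
    l2norm (fun j => ∑ k, cf k * M k j) ≤ s * R := by
  have he : toE (fun j => ∑ k, cf k * M k j) = ∑ k, cf k • toE (M k) := by
    simp only [toE, ← WithLp.toLp_smul, ← WithLp.toLp_sum]
    congr 1
    funext j
    rw [Finset.sum_apply]
    simp [Pi.smul_apply, smul_eq_mul]
  calc l2norm (fun j => ∑ k, cf k * M k j) = ‖∑ k, cf k • toE (M k)‖ := by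
        rw [l2norm_eq, he]
    _ ≤ ∑ k, ‖cf k • toE (M k)‖ := norm_sum_le _ _
    _ = ∑ k, cf k * l2norm (M k) := by
        refine Finset.sum_congr rfl fun k _ => ?_
        rw [norm_smul, Real.norm_eq_abs, abs_of_nonneg (hc k), l2norm_eq]
    _ ≤ ∑ k, cf k * R := Finset.sum_le_sum fun k _ =>
        mul_le_mul_of_nonneg_left (hM k) (hc k)
    _ = (∑ k, cf k) * R := by rw [Finset.sum_mul]
    _ ≤ s * R := mul_le_mul_of_nonneg_right hs hR


/-- Bound on MPGNN node representations: with `κ = C_φ B ‖W₁‖₂` and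
`τ = d C_φ C_ρ C_g ‖W₂‖₂`, for every `1 ≤ j ≤ l - 1` and node `i`:
`|H_j[i,:]|₂ ≤ j κ` if `τ = 1`, and `|H_j[i,:]|₂ ≤ κ (τ^j − 1)/(τ − 1)` if `τ ≠ 1`. -/
theorem mpgnn_hidden_bound {n c h0 hd : ℕ} (hn : 0 < n) (d l : ℕ) (hl : 1 < l)
    (B : ℝ) (hB : 0 < B)
    (Cin Cout : Matrix (Fin n) (Fin c) ℝ) (hInc : IsIncidence d Cin Cout)
    (g ρ φ : (Fin hd → ℝ) → Fin hd → ℝ) (Cg Cρ Cφ : ℝ)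
    (hCg : 0 ≤ Cg) (hCρ : 0 ≤ Cρ) (hCφ : 0 ≤ Cφ)
    (hg : LipL2 Cg g) (hρ : LipL2 Cρ ρ) (hφ : LipL2 Cφ φ)
    (hg0 : g 0 = 0) (hρ0 : ρ 0 = 0) (hφ0 : φ 0 = 0)
    (W1 : Matrix (Fin h0) (Fin hd) ℝ) (W2 : Matrix (Fin hd) (Fin hd) ℝ)
    (X : Matrix (Fin n) (Fin h0) ℝ) (hX : ∀ i, l2norm (X i) ≤ B)
    (κ τ : ℝ) (hκ : κ = Cφ * B * specNorm W1)
    (hτ : τ = (d : ℝ) * (Cφ * Cρ * Cg * specNorm W2))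
    (j : ℕ) (hj1 : 1 ≤ j) (hj2 : j ≤ l - 1) :
    (τ = 1 → ∀ i, l2norm (mpH Cin Cout g ρ φ W1 W2 X j i) ≤ (j : ℝ) * κ) ∧
    (τ ≠ 1 → ∀ i, l2norm (mpH Cin Cout g ρ φ W1 W2 X j i) ≤
      κ * (τ ^ j - 1) / (τ - 1)) := by
  obtain ⟨hin01, hout01, houtsum, hinsum⟩ := hInc
  have hW1 := specNorm_nonneg W1
  have hW2 := specNorm_nonneg W2
  have hκ0 : 0 ≤ κ := by rw [hκ]; exact mul_nonneg (mul_nonneg hCφ hB.le) hW1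
  have hτ0 : 0 ≤ τ := by
    rw [hτ]
    exact mul_nonneg (Nat.cast_nonneg d)
      (mul_nonneg (mul_nonneg (mul_nonneg hCφ hCρ) hCg) hW2)
  have key : ∀ m i, l2norm (mpH Cin Cout g ρ φ W1 W2 X m i) ≤
      κ * ∑ k ∈ Finset.range m, τ ^ k := by
    intro m
    induction m with
    | zero =>
      intro i
      have h0 : mpH Cin Cout g ρ φ W1 W2 X 0 i = 0 := rfl
      rw [h0, l2norm_zero]
      simp
    | succ m ih =>
      intro i
      have hS : (0:ℝ) ≤ ∑ k ∈ Finset.range m, τ ^ k :=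
        Finset.sum_nonneg fun k _ => pow_nonneg hτ0 k
      set R := κ * ∑ k ∈ Finset.range m, τ ^ k with hRdef
      have hR : 0 ≤ R := mul_nonneg hκ0 hS
      set H := mpH Cin Cout g ρ φ W1 W2 X m with hH
      set G := rowMap g (Cout.transpose * H) with hG
      set Mb := Cin * G with hMb
      have hCoutH : ∀ k, l2norm ((Cout.transpose * H) k) ≤ R := by
        intro k
        have hrow : (Cout.transpose * H) k = fun j2 => ∑ i2, Cout i2 k * H i2 j2 := by
          funext j2; simp [Matrix.mul_apply, Matrix.transpose_apply]
        rw [hrow]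
        have := sum_rows_bound (fun i2 => Cout i2 k) (fun i2 => H i2)
          (fun i2 => by rcases hout01 i2 k with h | h <;> simp [h]) 1 R
          (le_of_eq (houtsum k)) (fun i2 => ih i2) hR
        simpa using this
      have hGk : ∀ k, l2norm (G k) ≤ Cg * R := by
        intro k
        have hgk : G k = g ((Cout.transpose * H) k) := rfl
        rw [hgk]
        calc l2norm (g ((Cout.transpose * H) k))
            ≤ Cg * l2norm ((Cout.transpose * H) k) := lip_norm_le hg hg0 _
          _ ≤ Cg * R := mul_le_mul_of_nonneg_left (hCoutH k) hCg
      have hMbi : l2norm (Mb i) ≤ (d : ℝ) * (Cg * R) := by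
        have hrow : Mb i = fun j2 => ∑ k, Cin i k * G k j2 := by
          funext j2; simp [hMb, Matrix.mul_apply]
        rw [hrow]
        exact sum_rows_bound (Cin i) G
          (fun k => by rcases hin01 i k with h | h <;> simp [h])
          (d : ℝ) (Cg * R) (hinsum i) hGk (mul_nonneg hCg hR)
      have hrow : mpH Cin Cout g ρ φ W1 W2 X (m + 1) i
          = φ ((X * W1) i + ((rowMap ρ Mb) * W2) i) := rfl
      rw [hrow]
      have h1 : l2norm ((X * W1) i) ≤ specNorm W1 * B :=
        le_trans (row_matmul_le X W1 i) (mul_le_mul_of_nonneg_left (hX i) hW1)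
      have h2 : l2norm (((rowMap ρ Mb) * W2) i)
          ≤ specNorm W2 * (Cρ * ((d : ℝ) * (Cg * R))) := by
        refine le_trans (row_matmul_le _ W2 i) (mul_le_mul_of_nonneg_left ?_ hW2)
        have hri : (rowMap ρ Mb) i = ρ (Mb i) := rfl
        rw [hri]
        calc l2norm (ρ (Mb i)) ≤ Cρ * l2norm (Mb i) := lip_norm_le hρ hρ0 _
          _ ≤ Cρ * ((d : ℝ) * (Cg * R)) := mul_le_mul_of_nonneg_left hMbi hCρ
      calc l2norm (φ ((X * W1) i + ((rowMap ρ Mb) * W2) i))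
          ≤ Cφ * l2norm ((X * W1) i + ((rowMap ρ Mb) * W2) i) := lip_norm_le hφ hφ0 _
        _ ≤ Cφ * (specNorm W1 * B + specNorm W2 * (Cρ * ((d : ℝ) * (Cg * R)))) := by
            have h3 := l2norm_add_le ((X * W1) i) (((rowMap ρ Mb) * W2) i)
            exact mul_le_mul_of_nonneg_left
              (le_trans h3 (add_le_add h1 h2)) hCφ
        _ = κ * ∑ k ∈ Finset.range (m + 1), τ ^ k := by
            rw [geom_sum_succ, hRdef, hκ, hτ]
            ring
  constructor
  · intro ht i
    have h := key j i
    rw [ht] at h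
    simpa [mul_comm] using h
  · intro ht i
    have h := key j i
    rw [geom_sum_eq ht] at h
    calc l2norm (mpH Cin Cout g ρ φ W1 W2 X j i)
        ≤ κ * ((τ ^ j - 1) / (τ - 1)) := h
      _ = κ * (τ ^ j - 1) / (τ - 1) := (mul_div_assoc _ _ _).symm
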